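/- Under Assumption (A), for every 0 ≤ t < T and x ∈ ℝ^d, the optimal drift u*_λ(t,x) = 2β ∇_x log h_λ(t,x) admits the averaged-gradient representation u*_λ(t,x) = −(T/λ) ∫_{ℝ^d} ∇f(y) η_{λ,t,x}(y) dy, where η_{λ,t,x}(y) = G_{T−t}(x−y) π_λ(y)/h_λ(t,x). -/

import Mathlib

open MeasureTheory Real Filter Topology
open scoped RealInnerProductSpace

noncomputable section

/-- The heat kernel with diffusivity `β`: `G_r(z) = (4πβr)^(−d/2) exp(−‖z‖²/(4βr))`. -/
def heatK {d : ℕ} (β r : ℝ) (z : EuclideanSpace ℝ (Fin d)) : ℝ :=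
  (4 * π * β * r) ^ (-(d : ℝ) / 2) * Real.exp (-‖z‖ ^ 2 / (4 * β * r))

/-- The Laplacian of a scalar function on `ℝ^d`. -/
def lap {d : ℕ} (g : EuclideanSpace ℝ (Fin d) → ℝ) (x : EuclideanSpace ℝ (Fin d)) : ℝ :=
  ∑ i : Fin d,
    fderiv ℝ (fun z => fderiv ℝ g z (EuclideanSpace.single i 1)) x (EuclideanSpace.single i 1)

/-- The normalized Gibbs density `π_λ(y) = e^{−α_λ f(y)} / M_λ`, with `α_λ = T/(2λβ)`. -/
def gibbsDen {d : ℕ} (T β lam : ℝ) (f : EuclideanSpace ℝ (Fin d) → ℝ)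
    (y : EuclideanSpace ℝ (Fin d)) : ℝ :=
  Real.exp (-(T / (2 * lam * β)) * f y) / ∫ z, Real.exp (-(T / (2 * lam * β)) * f z)

/-- `h_λ(t,x) = ∫ G_{T−t}(x−y) π_λ(y) dy`. -/
def hHC {d : ℕ} (T β lam : ℝ) (f : EuclideanSpace ℝ (Fin d) → ℝ) (t : ℝ)
    (x : EuclideanSpace ℝ (Fin d)) : ℝ :=
  ∫ y, heatK β (T - t) (x - y) * gibbsDen T β lam f y

/-- The conditional terminal density `η_{λ,t,x}(y) = G_{T−t}(x−y) π_λ(y) / h_λ(t,x)`. -/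
def etaHC {d : ℕ} (T β lam : ℝ) (f : EuclideanSpace ℝ (Fin d) → ℝ) (t : ℝ)
    (x y : EuclideanSpace ℝ (Fin d)) : ℝ :=
  heatK β (T - t) (x - y) * gibbsDen T β lam f y / hHC T β lam f t x

/-- The barycenter `a_λ(t,x) = ∫ y η_{λ,t,x}(y) dy`. -/
def aHC {d : ℕ} (T β lam : ℝ) (f : EuclideanSpace ℝ (Fin d) → ℝ) (t : ℝ)
    (x : EuclideanSpace ℝ (Fin d)) : EuclideanSpace ℝ (Fin d) :=
  ∫ y, etaHC T β lam f t x y • y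

/-- The optimal drift `u*_λ(t,x) = 2β ∇_x log h_λ(t,x)`. -/
def uHC {d : ℕ} (T β lam : ℝ) (f : EuclideanSpace ℝ (Fin d) → ℝ) (t : ℝ)
    (x : EuclideanSpace ℝ (Fin d)) : EuclideanSpace ℝ (Fin d) :=
  (2 * β) • gradient (fun z => Real.log (hHC T β lam f t z)) x

/-- The potential `Φ_λ(t,x) = −2β log h_λ(t,x)`. -/
def PhiHC {d : ℕ} (T β lam : ℝ) (f : EuclideanSpace ℝ (Fin d) → ℝ) (t : ℝ)
    (x : EuclideanSpace ℝ (Fin d)) : ℝ :=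
  -(2 * β) * Real.log (hHC T β lam f t x)

/-- The value function `V_λ(t,x) = −(2λβ/T) log h_λ(t,x) − (2λβ/T) log M_λ`. -/
def VHC {d : ℕ} (T β lam : ℝ) (f : EuclideanSpace ℝ (Fin d) → ℝ) (t : ℝ)
    (x : EuclideanSpace ℝ (Fin d)) : ℝ :=
  -(2 * lam * β / T) * Real.log (hHC T β lam f t x)
    - (2 * lam * β / T) * Real.log (∫ z, Real.exp (-(T / (2 * lam * β)) * f z))


/-! Write `h_λ(t, ·)` as the convolution of the heat kernel `G = G_{T-t}` with `π_λ`. Since `G` is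
bounded with bounded derivative, one may differentiate under the integral sign, and integration by
parts moves the gradient from `G(x - y)` onto `π_λ(y)`, whose gradient is `-α_λ π_λ(y) ∇f(y)`
(integrable by Assumption (A)). Dividing by `h_λ(t, x) > 0` turns `G(x - y) π_λ(y)` into
`η_{λ,t,x}(y)`, and `2β α_λ = T/λ`. -/

theorem integral_pos_of_forall_pos {α : Type*} [MeasurableSpace α] {μ : Measure α} [NeZero μ]
    {f : α → ℝ} (hf : Integrable f μ) (hpos : ∀ x, 0 < f x) : 0 < ∫ x, f x ∂μ := by
  rw [integral_pos_iff_support_of_nonneg (fun x ↦ (hpos x).le) hf,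
    Function.support_eq_univ fun x ↦ (hpos x).ne']
  exact pos_iff_ne_zero.2 (NeZero.ne _)

section KernelIntegral

variable {E : Type*} [NormedAddCommGroup E] [MeasurableSpace E] [BorelSpace E] {μ : Measure E}
  {K g : E → ℝ} {C C' : ℝ}

theorem integrable_kernel_sub_mul (hK : Continuous K) (hKle : ∀ z, |K z| ≤ C)
    (hg : Integrable g μ) (x : E) : Integrable (fun y ↦ K (x - y) * g y) μ :=
  hg.bdd_mul (hK.comp (continuous_const.sub continuous_id)).aestronglyMeasurable
    (.of_forall fun y ↦ hKle (x - y))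

variable [NormedSpace ℝ E] [SecondCountableTopology E]

theorem integrable_smul_fderiv_kernel_sub (hK : ContDiff ℝ 1 K)
    (hK'le : ∀ z, ‖fderiv ℝ K z‖ ≤ C') (hg : Integrable g μ) (x : E) :
    Integrable (fun y ↦ g y • fderiv ℝ K (x - y)) μ := by
  refine (hg.norm.const_mul C').mono'
    (hg.aestronglyMeasurable.smul ((hK.continuous_fderiv one_ne_zero).comp
      (continuous_const.sub continuous_id)).aestronglyMeasurable) (.of_forall fun y ↦ ?_)
  rw [norm_smul, mul_comm]
  exact mul_le_mul_of_nonneg_right (hK'le _) (norm_nonneg _)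

theorem hasFDerivAt_integral_kernel_sub_mul (hK : ContDiff ℝ 1 K) (hKle : ∀ z, |K z| ≤ C)
    (hK'le : ∀ z, ‖fderiv ℝ K z‖ ≤ C') (hg : Integrable g μ) (x : E) :
    HasFDerivAt (fun z ↦ ∫ y, K (z - y) * g y ∂μ) (∫ y, g y • fderiv ℝ K (x - y) ∂μ) x := by
  have hKd : Differentiable ℝ K := hK.differentiable one_ne_zero
  refine hasFDerivAt_integral_of_dominated_of_fderiv_le
    (F' := fun z y ↦ g y • fderiv ℝ K (z - y)) (bound := fun y ↦ C' * ‖g y‖)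
    Filter.univ_mem (.of_forall fun z ↦ (integrable_kernel_sub_mul hK.continuous hKle hg z).1)
    (integrable_kernel_sub_mul hK.continuous hKle hg x)
    (integrable_smul_fderiv_kernel_sub hK hK'le hg x).1 (.of_forall fun y z _ ↦ ?_)
    (hg.norm.const_mul C') (.of_forall fun y z _ ↦ ?_)
  · rw [norm_smul, mul_comm]
    exact mul_le_mul_of_nonneg_right (hK'le _) (norm_nonneg _)
  · have := ((hKd (z - y)).hasFDerivAt.comp z ((hasFDerivAt_id z).sub_const y)).mul_const (g y)
    simpa [smul_eq_mul] using this

-- Integration by parts, using `∂_y K (x - y) = -K' (x - y)`.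
theorem integral_smul_fderiv_kernel_sub_eq [FiniteDimensional ℝ E] [μ.IsAddHaarMeasure]
    (hK : ContDiff ℝ 1 K) (hKle : ∀ z, |K z| ≤ C) (hK'le : ∀ z, ‖fderiv ℝ K z‖ ≤ C')
    (hg : Differentiable ℝ g) (hgi : Integrable g μ) (x : E)
    (hKg' : Integrable (fun y ↦ K (x - y) • fderiv ℝ g y) μ) :
    ∫ y, g y • fderiv ℝ K (x - y) ∂μ = ∫ y, K (x - y) • fderiv ℝ g y ∂μ := by
  have hKd : Differentiable ℝ K := hK.differentiable one_ne_zero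
  have hφ : ∀ y, HasFDerivAt (fun w ↦ K (x - w)) (-fderiv ℝ K (x - y)) y := fun y ↦ by
    simpa [Function.comp_def] using
      (hKd (x - y)).hasFDerivAt.comp y ((hasFDerivAt_id y).const_sub x)
  ext v
  rw [ContinuousLinearMap.integral_apply (integrable_smul_fderiv_kernel_sub hK hK'le hgi x),
    ContinuousLinearMap.integral_apply hKg']
  have hibp := integral_mul_fderiv_eq_neg_fderiv_mul_of_integrable (μ := μ) (v := v)
    (f := fun w ↦ K (x - w)) (g := g) ?_ ?_ (integrable_kernel_sub_mul hK.continuous hKle hgi x)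
    (fun y _ ↦ (hφ y).differentiableAt) (fun y _ ↦ hg y)
  · simp only [(hφ _).fderiv] at hibp
    simpa [mul_comm, integral_neg] using hibp.symm
  · simpa [(hφ _).fderiv, mul_comm] using
      ((integrable_smul_fderiv_kernel_sub hK hK'le hgi x).apply_continuousLinearMap v).neg
  · simpa using hKg'.apply_continuousLinearMap v

end KernelIntegral

theorem mul_exp_neg_sq_div_le_sqrt {a s : ℝ} (ha : 0 < a) (hs : 0 ≤ s) :
    s * exp (-s ^ 2 / a) ≤ √a := by
  set q := s ^ 2 / a
  have hsq : s ^ 2 = a * q := by simp only [q]; field_simp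
  have hexp : exp (-s ^ 2 / a) = (exp q)⁻¹ := by rw [← exp_neg, neg_div]
  rw [le_sqrt (by positivity) ha.le, hexp]
  calc (s * (exp q)⁻¹) ^ 2 = a * (q / exp q) * (exp q)⁻¹ := by rw [mul_pow, hsq]; ring
    _ ≤ a * 1 * 1 := by
      gcongr
      · exact div_le_one_of_le₀ ((le_add_of_nonneg_right zero_le_one).trans (add_one_le_exp q))
          (exp_pos q).le
      · exact inv_le_one_of_one_le₀ (one_le_exp (by positivity))
    _ = a := by ring

section HeatKernel

variable {d : ℕ} {β r : ℝ}

theorem hasFDerivAt_heatK (z : EuclideanSpace ℝ (Fin d)) :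
    HasFDerivAt (heatK β r) ((-(heatK β r z / (2 * β * r))) • innerSL ℝ z) z := by
  have hsq : HasFDerivAt (fun w : EuclideanSpace ℝ (Fin d) ↦ -‖w‖ ^ 2) (-(2 • innerSL ℝ z)) z :=
    (hasStrictFDerivAt_norm_sq z).hasFDerivAt.neg
  have hK : heatK β r = fun w : EuclideanSpace ℝ (Fin d) ↦
      (4 * π * β * r) ^ (-(d : ℝ) / 2) * exp (-‖w‖ ^ 2 * (4 * β * r)⁻¹) := by
    funext w; simp only [heatK, div_eq_mul_inv]
  rw [hK]
  refine ((hsq.mul_const (4 * β * r)⁻¹).exp.const_mul _).congr_fderiv ?_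
  ext v
  simp only [smul_apply, neg_apply, coe_innerSL_apply,
    nsmul_eq_mul, smul_eq_mul]
  ring

theorem contDiff_heatK : ContDiff ℝ 1 (heatK (d := d) β r) := by
  unfold heatK
  exact contDiff_const.mul ((contDiff_norm_sq ℝ).neg.div_const _).exp

theorem heatK_pos (hβ : 0 < β) (hr : 0 < r) (z : EuclideanSpace ℝ (Fin d)) :
    0 < heatK β r z := by
  unfold heatK
  positivity

theorem abs_heatK_le (hβ : 0 < β) (hr : 0 < r) (z : EuclideanSpace ℝ (Fin d)) :
    |heatK β r z| ≤ (4 * π * β * r) ^ (-(d : ℝ) / 2) := by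
  rw [abs_of_pos (heatK_pos hβ hr z), heatK]
  refine mul_le_of_le_one_right (by positivity) (exp_le_one_iff.2 ?_)
  exact div_nonpos_of_nonpos_of_nonneg (by nlinarith [sq_nonneg ‖z‖]) (by positivity)

theorem norm_fderiv_heatK_le (hβ : 0 < β) (hr : 0 < r) (z : EuclideanSpace ℝ (Fin d)) :
    ‖fderiv ℝ (heatK β r) z‖ ≤ (4 * π * β * r) ^ (-(d : ℝ) / 2) * √(4 * β * r) / (2 * β * r) := by
  rw [(hasFDerivAt_heatK z).fderiv, norm_smul, innerSL_apply_norm, norm_neg, Real.norm_eq_abs,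
    abs_of_pos (div_pos (heatK_pos hβ hr z) (by positivity)), div_mul_eq_mul_div]
  gcongr ?_ / _
  calc heatK β r z * ‖z‖
      = (4 * π * β * r) ^ (-(d : ℝ) / 2) * (‖z‖ * exp (-‖z‖ ^ 2 / (4 * β * r))) := by
        rw [heatK]; ring
    _ ≤ (4 * π * β * r) ^ (-(d : ℝ) / 2) * √(4 * β * r) := by
        gcongr
        exact mul_exp_neg_sq_div_le_sqrt (by positivity) (norm_nonneg z)

end HeatKernel

theorem norm_fderiv_eq_norm_gradient {F : Type*} [NormedAddCommGroup F] [InnerProductSpace ℝ F]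
    [CompleteSpace F] {f : F → ℝ} (x : F) : ‖fderiv ℝ f x‖ = ‖gradient f x‖ := by
  rw [← toDual_gradient, LinearIsometryEquiv.norm_map]

theorem integral_smul_gradient_eq {F : Type*} [NormedAddCommGroup F] [InnerProductSpace ℝ F]
    [CompleteSpace F] [MeasurableSpace F] {μ : Measure F} {w f : F → ℝ}
    (h : Integrable (fun y ↦ w y • fderiv ℝ f y) μ) :
    ∫ y, w y • gradient f y ∂μ =
      (InnerProductSpace.toDual ℝ F).symm (∫ y, w y • fderiv ℝ f y ∂μ) := by
  have hpt : ∀ y, w y • gradient f y =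
      (InnerProductSpace.toDual ℝ F).symm (w y • fderiv ℝ f y) := by
    simp [gradient]
  simp_rw [hpt]
  exact ContinuousLinearMap.integral_comp_commSL (by simp)
    (InnerProductSpace.toDual ℝ F).symm.toContinuousLinearEquiv.toContinuousLinearMap h

section Gibbs

variable {d : ℕ} {T β lam : ℝ} {f : EuclideanSpace ℝ (Fin d) → ℝ}

theorem hasFDerivAt_gibbsDen {y : EuclideanSpace ℝ (Fin d)} (hf : DifferentiableAt ℝ f y) :
    HasFDerivAt (gibbsDen T β lam f)
      ((-(T / (2 * lam * β)) * gibbsDen T β lam f y) • fderiv ℝ f y) y := by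
  have h := (hf.hasFDerivAt.const_mul (-(T / (2 * lam * β)))).exp.mul_const
    (∫ z, exp (-(T / (2 * lam * β)) * f z))⁻¹
  simp only [← div_eq_mul_inv] at h
  refine h.congr_fderiv ?_
  simp only [gibbsDen, smul_smul]
  congr 1
  ring

theorem gibbsDen_nonneg (y : EuclideanSpace ℝ (Fin d)) : 0 ≤ gibbsDen T β lam f y :=
  div_nonneg (exp_pos _).le (integral_nonneg fun _ ↦ (exp_pos _).le)

theorem integrable_gibbsDen (hexp : Integrable fun y ↦ exp (-(T / (2 * lam * β)) * f y)) :
    Integrable (gibbsDen T β lam f) :=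
  hexp.div_const _

theorem gibbsDen_pos (hexp : Integrable fun y ↦ exp (-(T / (2 * lam * β)) * f y))
    (y : EuclideanSpace ℝ (Fin d)) : 0 < gibbsDen T β lam f y :=
  div_pos (exp_pos _) (integral_exp_pos hexp)

end Gibbs

section HeatConvolution

variable {d : ℕ} {T β lam t : ℝ} {f : EuclideanSpace ℝ (Fin d) → ℝ}

theorem hHC_pos (hβ : 0 < β) (ht : t < T)
    (hexp : Integrable fun y ↦ exp (-(T / (2 * lam * β)) * f y)) (x : EuclideanSpace ℝ (Fin d)) :
    0 < hHC T β lam f t x :=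
  integral_pos_of_forall_pos
    (integrable_kernel_sub_mul contDiff_heatK.continuous (abs_heatK_le hβ (sub_pos.2 ht))
      (integrable_gibbsDen hexp) x)
    fun y ↦ mul_pos (heatK_pos hβ (sub_pos.2 ht) _) (gibbsDen_pos hexp y)

theorem integrable_heatK_mul_gibbsDen_smul_fderiv (hβ : 0 < β) (ht : t < T)
    (hf : ContDiff ℝ 1 f)
    (hgrad : Integrable fun y ↦ ‖fderiv ℝ f y‖ * exp (-(T / (2 * lam * β)) * f y))
    (x : EuclideanSpace ℝ (Fin d)) :
    Integrable fun y ↦ (heatK β (T - t) (x - y) * gibbsDen T β lam f y) • fderiv ℝ f y := by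
  set C := (4 * π * β * (T - t)) ^ (-(d : ℝ) / 2)
  set M := ∫ z, exp (-(T / (2 * lam * β)) * f z)
  have hcont : Continuous fun y ↦
      (heatK β (T - t) (x - y) * gibbsDen T β lam f y) • fderiv ℝ f y :=
    ((contDiff_heatK.continuous.comp (continuous_const.sub continuous_id)).mul
      ((continuous_exp.comp (continuous_const.mul hf.continuous)).div_const _)).smul
      (hf.continuous_fderiv one_ne_zero)
  refine (hgrad.const_mul (C / M)).mono' hcont.aestronglyMeasurable (.of_forall fun y ↦ ?_)
  rw [norm_smul, norm_mul, Real.norm_eq_abs, Real.norm_eq_abs, abs_of_nonneg (gibbsDen_nonneg y)]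
  calc |heatK β (T - t) (x - y)| * gibbsDen T β lam f y * ‖fderiv ℝ f y‖
      ≤ C * gibbsDen T β lam f y * ‖fderiv ℝ f y‖ := by
        gcongr
        · exact gibbsDen_nonneg y
        · exact abs_heatK_le hβ (sub_pos.2 ht) _
    _ = C / M * (‖fderiv ℝ f y‖ * exp (-(T / (2 * lam * β)) * f y)) := by
        rw [gibbsDen]; ring

theorem hasFDerivAt_hHC (hβ : 0 < β) (ht : t < T) (hf : ContDiff ℝ 1 f)
    (hexp : Integrable fun y ↦ exp (-(T / (2 * lam * β)) * f y))
    (hgrad : Integrable fun y ↦ ‖fderiv ℝ f y‖ * exp (-(T / (2 * lam * β)) * f y))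
    (x : EuclideanSpace ℝ (Fin d)) :
    HasFDerivAt (hHC T β lam f t) (-(T / (2 * lam * β)) •
      ∫ y, (heatK β (T - t) (x - y) * gibbsDen T β lam f y) • fderiv ℝ f y) x := by
  have hr : 0 < T - t := sub_pos.2 ht
  have hgibbs_deriv : ∀ y, heatK β (T - t) (x - y) • fderiv ℝ (gibbsDen T β lam f) y =
      -(T / (2 * lam * β)) • (heatK β (T - t) (x - y) * gibbsDen T β lam f y) • fderiv ℝ f y := by
    intro y
    rw [(hasFDerivAt_gibbsDen (hf.differentiable one_ne_zero y)).fderiv, smul_smul, smul_smul]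
    congr 1
    ring
  have hmoved := integral_smul_fderiv_kernel_sub_eq (μ := volume) contDiff_heatK
    (abs_heatK_le hβ hr) (norm_fderiv_heatK_le hβ hr)
    (fun y ↦ (hasFDerivAt_gibbsDen (hf.differentiable one_ne_zero y)).differentiableAt)
    (integrable_gibbsDen hexp) x (by
      simp_rw [hgibbs_deriv]
      exact (integrable_heatK_mul_gibbsDen_smul_fderiv hβ ht hf hgrad x).smul
        (-(T / (2 * lam * β))))
  simp_rw [hgibbs_deriv, integral_smul] at hmoved
  rw [← hmoved]
  exact hasFDerivAt_integral_kernel_sub_mul contDiff_heatK (abs_heatK_le hβ hr)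
    (norm_fderiv_heatK_le hβ hr) (integrable_gibbsDen hexp) x

theorem etaHC_smul {E : Type*} [AddCommGroup E] [Module ℝ E] (x y : EuclideanSpace ℝ (Fin d))
    (v : E) : etaHC T β lam f t x y • v =
      (hHC T β lam f t x)⁻¹ • (heatK β (T - t) (x - y) * gibbsDen T β lam f y) • v := by
  rw [etaHC, smul_smul, div_eq_inv_mul]

theorem integrable_etaHC_smul_fderiv (hβ : 0 < β) (ht : t < T) (hf : ContDiff ℝ 1 f)
    (hgrad : Integrable fun y ↦ ‖fderiv ℝ f y‖ * exp (-(T / (2 * lam * β)) * f y))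
    (x : EuclideanSpace ℝ (Fin d)) :
    Integrable fun y ↦ etaHC T β lam f t x y • fderiv ℝ f y := by
  simp_rw [etaHC_smul]
  exact (integrable_heatK_mul_gibbsDen_smul_fderiv hβ ht hf hgrad x).smul (hHC T β lam f t x)⁻¹

theorem hasFDerivAt_log_hHC (hβ : 0 < β) (ht : t < T) (hf : ContDiff ℝ 1 f)
    (hexp : Integrable fun y ↦ exp (-(T / (2 * lam * β)) * f y))
    (hgrad : Integrable fun y ↦ ‖fderiv ℝ f y‖ * exp (-(T / (2 * lam * β)) * f y))
    (x : EuclideanSpace ℝ (Fin d)) :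
    HasFDerivAt (fun z ↦ log (hHC T β lam f t z))
      (-(T / (2 * lam * β)) • ∫ y, etaHC T β lam f t x y • fderiv ℝ f y) x := by
  refine ((hasFDerivAt_hHC hβ ht hf hexp hgrad x).log (hHC_pos hβ ht hexp x).ne').congr_fderiv ?_
  simp_rw [etaHC_smul, integral_smul]
  exact smul_comm _ _ _

end HeatConvolution

theorem averaged_gradient_form_general (d : ℕ) (T β lam : ℝ)
    (hT : 0 < T) (hβ : 0 < β) (hlam : 0 < lam)
    (f : EuclideanSpace ℝ (Fin d) → ℝ)
    (hf : ContDiff ℝ 2 f)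
    (hint : ∀ c > 0,
      Integrable (fun y => Real.exp (-c * f y)) ∧
      Integrable (fun y => ‖gradient f y‖ * Real.exp (-c * f y)) ∧
      Integrable (fun y => ‖iteratedFDeriv ℝ 2 f y‖ * Real.exp (-c * f y))) :
    ∀ t : ℝ, 0 ≤ t → t < T → ∀ x : EuclideanSpace ℝ (Fin d),
      uHC T β lam f t x = -(T / lam) • ∫ y, etaHC T β lam f t x y • gradient f y := by
  intro t _ ht x
  obtain ⟨hexp, hgrad, -⟩ := hint (T / (2 * lam * β)) (by positivity)
  simp_rw [← norm_fderiv_eq_norm_gradient] at hgrad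
  have hf1 : ContDiff ℝ 1 f := hf.of_le one_le_two
  rw [uHC, (hasFDerivAt_log_hHC hβ ht hf1 hexp hgrad x).hasGradientAt.gradient,
    integral_smul_gradient_eq (integrable_etaHC_smul_fderiv hβ ht hf1 hgrad x),
    LinearIsometryEquiv.map_smulₛₗ, smul_smul]
  congr 1
  simp only [starRingEnd_apply, star_trivial]
  field_simp

theorem averaged_gradient_form (d : ℕ) (hd : 1 ≤ d) (T β lam : ℝ)
    (hT : 0 < T) (hβ : 0 < β) (hlam : 0 < lam)
    (f : EuclideanSpace ℝ (Fin d) → ℝ)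
    (hf : ContDiff ℝ 2 f)
    (hbdd : BddBelow (Set.range f))
    (hcoer : Tendsto f (cocompact (EuclideanSpace ℝ (Fin d))) atTop)
    (hint : ∀ c > 0,
      Integrable (fun y => Real.exp (-c * f y)) ∧
      Integrable (fun y => ‖gradient f y‖ * Real.exp (-c * f y)) ∧
      Integrable (fun y => ‖iteratedFDeriv ℝ 2 f y‖ * Real.exp (-c * f y))) :
    ∀ t : ℝ, 0 ≤ t → t < T → ∀ x : EuclideanSpace ℝ (Fin d),
      uHC T β lam f t x = -(T / lam) • ∫ y, etaHC T β lam f t x y • gradient f y :=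
  averaged_gradient_form_general d T β lam hT hβ hlam f hf hint
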